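/- arXiv:1312.3113 — 2 statements merged into one kernel-verified Lean document; each statement's English description precedes it below -/
import Mathlib

section
/- In a free Lie algebra over ℚ with generators T and V, the degree-3 term of log(e^{(h/6)V} e^{(h/2)T} e^{(2h/3)V} e^{(h/2)T} e^{(h/6)V}) equals -(h³/72)[V,[T,V]]; i.e., the 5-stage scheme has shadow Hamiltonian H̃ = T + V - (h²/72)[V,[T,V]] + O(h⁴), with no [T,[T,V]] term. -/
/-! Modulo `h⁴` both sides are determined by their coefficients of `h⁰, …, h³`, and each
of these is an identity between noncommutative polynomials in `T` and `V` of degree at most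
three, which holds in every associative `ℚ`-algebra. Because the splitting is palindromic the
`h²` coefficient is exactly `(T + V)² / 2`; in degree three the surplus over `(T + V)³ / 6`
is `(1/72) (VVT - 2VTV + TVV) = -(1/72)[V,[T,V]]`. -/

open Polynomial

/-- Exponential series truncated at degree 3 (enough to determine a BCH logarithm
modulo degree ≥ 4 in `h = X`). -/
noncomputable def texp {A : Type*} [Ring A] [Algebra ℚ A] (x : Polynomial A) : Polynomial A :=
  1 + x + (1/2 : ℚ) • x^2 + (1/6 : ℚ) • x^3

open scoped Nat

variable {A : Type*} [Ring A] [Algebra ℚ A]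

section CoeffTexp

variable {p : A[X]} (hp : p.coeff 0 = 0)
include hp

attribute [local simp] coeff_mul Finset.Nat.sum_antidiagonal_eq_sum_range_succ_mk
  Finset.sum_range_succ pow_succ coeff_one

theorem coeff_zero_texp : (texp p).coeff 0 = 1 := by simp [texp, hp]

theorem coeff_one_texp : (texp p).coeff 1 = p.coeff 1 := by simp [texp, hp]

theorem coeff_two_texp :
    (texp p).coeff 2 = p.coeff 2 + (1/2 : ℚ) • (p.coeff 1 * p.coeff 1) := by
  simp [texp, hp]

theorem coeff_three_texp : (texp p).coeff 3 = p.coeff 3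
    + (1/2 : ℚ) • (p.coeff 1 * p.coeff 2 + p.coeff 2 * p.coeff 1)
    + (1/6 : ℚ) • (p.coeff 1 * (p.coeff 1 * p.coeff 1)) := by
  simp [texp, hp, mul_assoc]

end CoeffTexp

theorem coeff_texp_smul_X_mul_C (a : ℚ) (w : A) {k : ℕ} (hk : k ≤ 3) :
    (texp (a • (X * C w))).coeff k = (a ^ k / k !) • w ^ k := by
  have h0 : (a • (X * C w)).coeff 0 = 0 := by simp
  interval_cases k
  · rw [coeff_zero_texp h0]; simp
  · rw [coeff_one_texp h0]; simp
  · rw [coeff_two_texp h0]; simp [smul_smul, pow_two]; module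
  · rw [coeff_three_texp h0]; simp [smul_smul, pow_succ, mul_assoc, Nat.factorial]; module

theorem coeff_texp_X_mul_C_add_X_pow_three_mul_C (w u : A) {k : ℕ} (hk : k ≤ 3) :
    (texp (X * C w + X ^ 3 * C u)).coeff k = (1 / k ! : ℚ) • w ^ k + if k = 3 then u else 0 := by
  have h0 : (X * C w + X ^ 3 * C u).coeff 0 = 0 := by simp
  interval_cases k
  · rw [coeff_zero_texp h0]; simp
  · rw [coeff_one_texp h0]; simp
  · rw [coeff_two_texp h0]; simp [pow_two]
  · rw [coeff_three_texp h0]; simp [pow_succ, mul_assoc, Nat.factorial, add_comm]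

theorem coeff_texp_five_stage (T V : A) {k : ℕ} (hk : k ≤ 3) :
    (texp ((1/6 : ℚ) • (X * C V)) * texp ((1/2 : ℚ) • (X * C T))
      * texp ((2/3 : ℚ) • (X * C V)) * texp ((1/2 : ℚ) • (X * C T))
      * texp ((1/6 : ℚ) • (X * C V))).coeff k
    = (texp (X * C (T + V) + X^3 * C ((-(1/72) : ℚ) • ⁅V, ⁅T, V⁆⁆))).coeff k := by
  rw [coeff_texp_X_mul_C_add_X_pow_three_mul_C _ _ hk]
  interval_cases k <;>
    simp only [coeff_mul, Finset.Nat.sum_antidiagonal_eq_sum_range_succ_mk,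
      Finset.sum_range_succ, Finset.sum_range_zero] <;>
    simp (disch := norm_num) only [coeff_texp_smul_X_mul_C] <;>
    norm_num [Nat.factorial, Ring.lie_def, mul_add, add_mul, mul_sub, sub_mul, pow_succ,
      mul_assoc] <;>
    module

/-- The 5-stage scheme: modulo `h⁴`,
`e^{(h/6)V} e^{(h/2)T} e^{(2h/3)V} e^{(h/2)T} e^{(h/6)V} = exp(h(T+V) - (h³/72)[V,[T,V]])`;
i.e. its shadow Hamiltonian is `H̃ = T + V - (h²/72)[V,[T,V]] + O(h⁴)`, with no
`[T,[T,V]]` term. -/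
theorem five_stage_shadow_hamiltonian :
    ∀ T V : FreeAlgebra ℚ (Fin 2), T = FreeAlgebra.ι ℚ 0 → V = FreeAlgebra.ι ℚ 1 →
    ∀ k : ℕ, k ≤ 3 →
      (texp ((1/6 : ℚ) • (X * C V)) * texp ((1/2 : ℚ) • (X * C T))
        * texp ((2/3 : ℚ) • (X * C V)) * texp ((1/2 : ℚ) • (X * C T))
        * texp ((1/6 : ℚ) • (X * C V))).coeff k
      = (texp (X * C (T + V) + X^3 * C ((-(1/72) : ℚ) • ⁅V, ⁅T, V⁆⁆))).coeff k :=
  fun T V _ _ _ hk => coeff_texp_five_stage T V hk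
end

section
/- Setting λ = 1/6 in the combination ((-1+6λ-6λ²)/12)[V₂,[T,V₂]] + ((-1+6λ)/24)[V₁,[T,V₂]] + ((-1+6λ)/24)[T,[T,V₂]] yields -(1/72)[V₂,[T,V₂]]; consequently, adding the term (1/72)h³[V₂,[T,V₂]] to the middle exponent of the 5-stage nested integrator with λ = 1/6 cancels the h²-error entirely, giving H̃ = H + O(h⁴). -/
open Polynomial

lemma smul_XC {A : Type*} [Ring A] [Algebra ℚ A] (a : ℚ) (v : A) :
    a • (X * C v) = monomial 1 (a • v) := by
  rw [X_mul_C, C_mul_X_eq_monomial, smul_monomial]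

lemma smul_X3C {A : Type*} [Ring A] [Algebra ℚ A] (a : ℚ) (v : A) :
    a • (X^3 * C v) = monomial 3 (a • v) := by
  rw [X_pow_mul_C, C_mul_X_pow_eq_monomial, smul_monomial]

lemma texp1_eq {A : Type*} [Ring A] [Algebra ℚ A] (a : ℚ) (v : A) :
    texp (a • (X * C v)) = monomial 0 (1:A) + monomial 1 (a • v)
    + monomial 2 ((1/2*a^2 : ℚ) • v^2) + monomial 3 ((1/6*a^3 : ℚ) • v^3) := by
  rw [texp, smul_XC]
  simp only [monomial_pow, smul_monomial, _root_.smul_pow, smul_smul]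
  norm_num [monomial_zero_one]

lemma texp2_eq {A : Type*} [Ring A] [Algebra ℚ A] (a b : ℚ) (v w : A) :
    texp (a • (X * C v) + b • (X^3 * C w)) =
    monomial 0 (1:A) + monomial 1 (a • v)
    + monomial 2 ((1/2*a^2 : ℚ) • v^2)
    + monomial 3 ((1/6*a^3 : ℚ) • v^3 + b • w)
    + monomial 4 ((1/2*a*b : ℚ) • (v*w + w*v))
    + monomial 5 ((1/6*a^2*b : ℚ) • (v^2*w + v*w*v + w*v^2))
    + monomial 6 ((1/2*b^2 : ℚ) • w^2)
    + monomial 7 ((1/6*a*b^2 : ℚ) • (v*w^2 + w*v*w + w^2*v))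
    + monomial 9 ((1/6*b^3 : ℚ) • w^3) := by
  rw [texp, smul_XC, smul_X3C]
  simp only [pow_two, pow_succ, pow_zero, one_mul, mul_add, add_mul,
    monomial_mul_monomial, smul_add, smul_monomial, smul_smul]
  simp only [Algebra.mul_smul_comm, Algebra.smul_mul_assoc, smul_smul,
    map_add, smul_monomial, mul_assoc]
  norm_num
  module

lemma texp1_eq' {A : Type*} [Ring A] [Algebra ℚ A] (v : A) :
    texp (X * C v) = monomial 0 (1:A) + monomial 1 v
    + monomial 2 ((1/2 : ℚ) • v^2) + monomial 3 ((1/6 : ℚ) • v^3) := by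
  have h := texp1_eq (A := A) 1 v
  simpa using h

set_option maxHeartbeats 2000000 in
/-- At `λ = 1/6` the `h²`-shadow-Hamiltonian error of the 5-stage nested integrator
reduces to `-(1/72)[V₂,[T,V₂]]`; consequently replacing the middle factor
`e^{(2/3)hV₂}` by `e^{(2/3)hV₂ + (1/72)h³[V₂,[T,V₂]]}` cancels the `h²`-error
entirely: the product equals `exp(h(T+V₁+V₂))` modulo `h⁴`, i.e. `H̃ = H + O(h⁴)`. -/
theorem force_gradient_nested_integrator
    {A : Type*} [Ring A] [Algebra ℚ A] (T V₁ V₂ : A)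
    (hcomm : ⁅V₁, V₂⁆ = 0) :
    (((-1 + 6*(1/6 : ℚ) - 6*(1/6 : ℚ)^2)/12) • ⁅V₂, ⁅T, V₂⁆⁆
      + ((-1 + 6*(1/6 : ℚ))/24) • ⁅V₁, ⁅T, V₂⁆⁆
      + ((-1 + 6*(1/6 : ℚ))/24) • ⁅T, ⁅T, V₂⁆⁆
      = (-(1/72) : ℚ) • ⁅V₂, ⁅T, V₂⁆⁆) ∧
    (∀ k : ℕ, k ≤ 3 →
      (texp ((1/6 : ℚ) • (X * C V₂)) * texp ((1/2 : ℚ) • (X * C (V₁ + T)))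
        * texp ((2/3 : ℚ) • (X * C V₂) + (1/72 : ℚ) • (X^3 * C ⁅V₂, ⁅T, V₂⁆⁆))
        * texp ((1/2 : ℚ) • (X * C (V₁ + T)))
        * texp ((1/6 : ℚ) • (X * C V₂))).coeff k
      = (texp (X * C (T + V₁ + V₂))).coeff k) := by
  have hc : V₁ * V₂ = V₂ * V₁ := by
    have h := hcomm; rw [Ring.lie_def, sub_eq_zero] at h; exact h
  have hc' : ∀ x : A, V₁ * (V₂ * x) = V₂ * (V₁ * x) := fun x => by
    rw [← mul_assoc, hc, mul_assoc]
  constructor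
  · norm_num
  · intro k hk
    interval_cases k <;>
    · simp only [texp1_eq, texp2_eq, texp1_eq', coeff_mul,
        Finset.Nat.sum_antidiagonal_eq_sum_range_succ_mk, Finset.sum_range_succ,
        Finset.sum_range_zero, coeff_add, coeff_monomial]
      norm_num
      try simp only [Ring.lie_def, mul_add, add_mul, mul_sub, sub_mul, smul_add,
        smul_sub, Algebra.mul_smul_comm, Algebra.smul_mul_assoc, smul_smul,
        pow_succ, pow_zero, one_mul, mul_assoc, hc, hc']
      try module
end
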